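/- arXiv:2411.14382 — 2 statements merged into one kernel-verified Lean document; each statement's English description precedes it below -/
import Mathlib

section
/- Let c > 0, α ∈ ℝ, λ ∈ ℝ, and assume (λ+α)² − 4c = 0. Then the unique solution x of the memory ODE with kernel M(t) = c·e^{αt} and parameter λ is given by x(t) = (1 − (λ+α)·t/2)·e^{−(λ−α)·t/2} for all t ≥ 0. -/
/-!
Since `d/dt e^{α(t−s)} = α·e^{α(t−s)}`, the memory term `m(t) = ∫₀ᵗ c·e^{α(t−s)} x(s) ds`
satisfies `m' = c·x + α·m`, so `(x, m)` solves the linear system `x' = −λx − m`, `m' = cx + αm`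
with `(x, m)(0) = (1, 0)`. When `(λ+α)² = 4c` the matrix of this system has the double eigenvalue
`(α−λ)/2`, and `(1 − (λ+α)t/2, ct)·e^{(α−λ)t/2}` solves the same initial value problem;
uniqueness for Lipschitz vector fields (Grönwall) identifies the two.
-/

noncomputable section

/-- `MemSol M lam x x'` says `x` is a solution on `[0,∞)` of the memory ODE
`x'(t) + lam·x(t) + ∫₀ᵗ M(t−s)·x(s) ds = 0`, `x(0)=1`, with continuous
derivative `x'` on `[0,∞)` (i.e. `x` is continuously differentiable there). -/
def MemSol (M : ℝ → ℝ) (lam : ℝ) (x x' : ℝ → ℝ) : Prop :=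
  x 0 = 1 ∧ ContinuousOn x' (Set.Ici 0) ∧
    (∀ t ∈ Set.Ici (0 : ℝ), HasDerivWithinAt x (x' t) (Set.Ici 0) t) ∧
    (∀ t ∈ Set.Ici (0 : ℝ), x' t + lam * x t + ∫ s in (0:ℝ)..t, M (t - s) * x s = 0)

open Set Real

theorem eqOn_Ici_of_hasDerivWithinAt_clm {E : Type*} [NormedAddCommGroup E] [NormedSpace ℝ E]
    (A : E →L[ℝ] E) {f g : ℝ → E} {a : ℝ}
    (hf : ∀ t ∈ Ici a, HasDerivWithinAt f (A (f t)) (Ici a) t)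
    (hg : ∀ t ∈ Ici a, HasDerivWithinAt g (A (g t)) (Ici a) t)
    (ha : f a = g a) : EqOn f g (Ici a) := by
  intro T hT
  have hcont : ∀ {h : ℝ → E}, (∀ t ∈ Ici a, HasDerivWithinAt h (A (h t)) (Ici a) t) →
      ContinuousOn h (Icc a T) := fun hh t ht =>
    (hh t ht.1).continuousWithinAt.mono Icc_subset_Ici_self
  refine ODE_solution_unique_of_mem_Icc_right (v := fun _ => A) (s := fun _ => univ)
    (fun _ _ => A.lipschitz.lipschitzOnWith) (hcont hf)
    (fun t ht => (hf t ht.1).mono (Ici_subset_Ici.mpr ht.1)) (fun _ _ => mem_univ _) (hcont hg)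
    (fun t ht => (hg t ht.1).mono (Ici_subset_Ici.mpr ht.1)) (fun _ _ => mem_univ _) ha
    ⟨hT, le_rfl⟩

theorem hasDerivWithinAt_integral_Ici {E : Type*} [NormedAddCommGroup E] [NormedSpace ℝ E]
    [CompleteSpace E] {f : ℝ → E} {a t : ℝ} (hf : ContinuousOn f (Ici a)) (ht : t ∈ Ici a) :
    HasDerivWithinAt (fun u => ∫ s in a..u, f s) (f t) (Ici a) t := by
  have hint : IntervalIntegrable f MeasureTheory.volume a t :=
    (hf.mono (by simpa [uIcc_of_le (mem_Ici.mp ht)] using Icc_subset_Ici_self)).intervalIntegrable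
  have hfo : ContinuousOn f (Ioi a) := hf.mono Ioi_subset_Ici_self
  rcases (mem_Ici.mp ht).eq_or_lt with rfl | hat
  · exact intervalIntegral.integral_hasDerivWithinAt_right hint
      (hfo.stronglyMeasurableAtFilter_nhdsWithin measurableSet_Ioi a)
      ((hf a ht).mono Ioi_subset_Ici_self)
  · exact (intervalIntegral.integral_hasDerivAt_right hint
      (hfo.stronglyMeasurableAtFilter isOpen_Ioi t hat)
      (hfo.continuousAt (Ioi_mem_nhds hat))).hasDerivWithinAt

section ExpKernel

variable (c α : ℝ)

def expKernelMemory (x : ℝ → ℝ) (t : ℝ) : ℝ := ∫ s in (0:ℝ)..t, c * exp (α * (t - s)) * x s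

theorem expKernelMemory_eq (x : ℝ → ℝ) (t : ℝ) :
    expKernelMemory c α x t = c * exp (α * t) * ∫ s in (0:ℝ)..t, exp (-(α * s)) * x s := by
  rw [expKernelMemory, ← intervalIntegral.integral_const_mul]
  congr 1 with s
  rw [mul_sub, exp_sub, exp_neg]
  ring

theorem hasDerivWithinAt_expKernelMemory {x : ℝ → ℝ} (hx : ContinuousOn x (Ici 0)) {t : ℝ}
    (ht : t ∈ Ici 0) :
    HasDerivWithinAt (expKernelMemory c α x) (c * x t + α * expKernelMemory c α x t) (Ici 0) t := by
  have hexp : HasDerivAt (fun t => c * exp (α * t)) (c * exp (α * t) * α) t := by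
    simpa [mul_assoc] using (((hasDerivAt_id t).const_mul α).exp).const_mul c
  have hI := hasDerivWithinAt_integral_Ici (f := fun s => exp (-(α * s)) * x s)
    ((continuous_exp.comp (continuous_const_mul α).neg).continuousOn.mul hx) ht
  rw [funext (expKernelMemory_eq c α x)]
  refine (hexp.hasDerivWithinAt.mul hI).congr_deriv ?_
  have : exp (α * t) * exp (-(α * t)) = 1 := by rw [← exp_add]; simp
  linear_combination (c * x t) * this

variable (lam : ℝ)

def expKernelSystem : ℝ × ℝ →L[ℝ] ℝ × ℝ :=
  ((-lam) • ContinuousLinearMap.fst ℝ ℝ ℝ - ContinuousLinearMap.snd ℝ ℝ ℝ).prod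
    (c • ContinuousLinearMap.fst ℝ ℝ ℝ + α • ContinuousLinearMap.snd ℝ ℝ ℝ)

@[simp]
theorem expKernelSystem_apply (p : ℝ × ℝ) :
    expKernelSystem c α lam p = (-lam * p.1 - p.2, c * p.1 + α * p.2) := by
  simp [expKernelSystem]

theorem MemSol.hasDerivWithinAt_prod_expKernelMemory {x x' : ℝ → ℝ}
    (hx : MemSol (fun t => c * exp (α * t)) lam x x') {t : ℝ} (ht : t ∈ Ici 0) :
    HasDerivWithinAt (fun t => (x t, expKernelMemory c α x t))
      (expKernelSystem c α lam (x t, expKernelMemory c α x t)) (Ici 0) t := by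
  obtain ⟨-, -, hderiv, hmem⟩ := hx
  have hxc : ContinuousOn x (Ici 0) := fun t ht => (hderiv t ht).continuousWithinAt
  have hx' : x' t = -lam * x t - expKernelMemory c α x t := by
    linear_combination (norm := skip) hmem t ht
    rw [expKernelMemory]
    ring
  rw [expKernelSystem_apply, ← hx']
  exact (hderiv t ht).prodMk (hasDerivWithinAt_expKernelMemory c α hxc ht)

def criticalSolution (t : ℝ) : ℝ × ℝ :=
  ((1 - (lam + α) * t / 2) * exp (-((lam - α) * t / 2)), c * t * exp (-((lam - α) * t / 2)))

theorem hasDerivAt_criticalSolution (hs : (lam + α) ^ 2 - 4 * c = 0) (t : ℝ) :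
    HasDerivAt (criticalSolution c α lam)
      (expKernelSystem c α lam (criticalSolution c α lam t)) t := by
  have hexp : HasDerivAt (fun t => exp (-((lam - α) * t / 2)))
      (exp (-((lam - α) * t / 2)) * (-((lam - α) / 2))) t :=
    ((((hasDerivAt_id t).const_mul (lam - α)).div_const 2).neg.congr_deriv (by ring)).exp
  have hlin : HasDerivAt (fun t => 1 - (lam + α) * t / 2) (-((lam + α) / 2)) t := by
    simpa using (((hasDerivAt_id t).const_mul (lam + α)).div_const 2).const_sub 1
  have hm : HasDerivAt (fun t => c * t) c t := by simpa using (hasDerivAt_id t).const_mul c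
  refine ((hlin.mul hexp).prodMk (hm.mul hexp)).congr_deriv ?_
  simp only [expKernelSystem_apply, criticalSolution, Prod.mk.injEq]
  constructor
  · linear_combination (-(exp (-((lam - α) * t / 2)) * t / 4)) * hs
  · ring

end ExpKernel

theorem stmt12_general (c α lam : ℝ)
    (hs : (lam + α) ^ 2 - 4 * c = 0)
    (x x' : ℝ → ℝ) (hx : MemSol (fun t => c * Real.exp (α * t)) lam x x') :
    ∀ t ≥ (0:ℝ),
      x t = (1 - (lam + α) * t / 2) * Real.exp (-((lam - α) * t / 2)) := by
  intro t ht
  have hagree := eqOn_Ici_of_hasDerivWithinAt_clm (expKernelSystem c α lam)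
    (fun s hs₀ => hx.hasDerivWithinAt_prod_expKernelMemory c α lam hs₀)
    (fun s _ => (hasDerivAt_criticalSolution c α lam hs s).hasDerivWithinAt)
    (by simp [hx.1, expKernelMemory, criticalSolution]) ht
  exact congrArg Prod.fst hagree

/-- Explicit solution of the memory ODE with kernel `c·e^{αt}` when the discriminant
`(λ+α)² − 4c` vanishes. -/
theorem stmt12 (c α lam : ℝ) (hc : 0 < c)
    (hs : (lam + α) ^ 2 - 4 * c = 0)
    (x x' : ℝ → ℝ) (hx : MemSol (fun t => c * Real.exp (α * t)) lam x x') :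
    ∀ t ≥ (0:ℝ),
      x t = (1 - (lam + α) * t / 2) * Real.exp (-((lam - α) * t / 2)) :=
  stmt12_general c α lam hs x x' hx
end
end

section
/- Let c > 0, α ∈ ℝ, λ ∈ ℝ, and assume (λ+α)² − 4c = 0. Let x be the unique solution of the memory ODE with kernel M(t) = c·e^{αt} and parameter λ. Then: if λ + α ≤ 0, then x(t) ≠ 0 for all t > 0; and if λ + α > 0, then for t > 0, x(t) = 0 if and only if t = 2/(λ+α). -/
/-!
For the kernel `c e^{αt}` the memory term factors as `c e^{αt} Y(t)` with
`Y(t) = ∫₀ᵗ e^{-αs} x(s) ds`, so `(e^{-αt} x, Y)` solves the autonomous linear system of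
`Y'' + (λ+α) Y' + c Y = 0` with `Y(0) = 0`, `Y'(0) = 1`. When `(λ+α)² = 4c` this oscillator is
critically damped: with `a = (λ+α)/2` uniqueness of solutions gives `Y(t) = t e^{-at}`, hence
`x(t) = e^{((α-λ)/2) t} (1 - a t)`, which vanishes exactly when `a t = 1`.
-/

noncomputable section

open Set Real

theorem eqOn_Ici_of_hasDerivWithinAt_of_lipschitzWith {E : Type*} [NormedAddCommGroup E]
    [NormedSpace ℝ E] {v : E → E} {K : NNReal} (hv : LipschitzWith K v) {f g : ℝ → E} {a : ℝ}
    (hf : ContinuousOn f (Ici a)) (hf' : ∀ t ∈ Ici a, HasDerivWithinAt f (v (f t)) (Ici t) t)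
    (hg : ContinuousOn g (Ici a)) (hg' : ∀ t ∈ Ici a, HasDerivWithinAt g (v (g t)) (Ici t) t)
    (ha : f a = g a) : EqOn f g (Ici a) := fun _ hT =>
  ODE_solution_unique (v := fun _ => v) (fun _ => hv) (hf.mono Icc_subset_Ici_self)
    (fun t ht => hf' t ht.1) (hg.mono Icc_subset_Ici_self) (fun t ht => hg' t ht.1) ha
    ⟨hT, le_rfl⟩

theorem continuousOn_primitive_Ici {h : ℝ → ℝ} {a : ℝ} (hh : ContinuousOn h (Ici a)) :
    ContinuousOn (fun t => ∫ s in a..t, h s) (Ici a) := by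
  intro t ht
  have hab : a ≤ t + 1 := by linarith [mem_Ici.1 ht]
  have hIcc : ContinuousOn (fun t => ∫ s in a..t, h s) (Icc a (t + 1)) := by
    rw [← uIcc_of_le hab]
    refine intervalIntegral.continuousOn_primitive_interval
      ((hh.mono ?_).integrableOn_compact isCompact_uIcc)
    rw [uIcc_of_le hab]
    exact Icc_subset_Ici_self
  exact (hIcc t ⟨ht, by linarith⟩).mono_of_mem_nhdsWithin
    (inter_mem_nhdsWithin _ (Iic_mem_nhds (by linarith)))

/-- The first-order system `(u, y)' = (-p u - q y, u)` of `y'' + p y' + q y = 0`. -/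
def companionField (p q : ℝ) : ℝ × ℝ →L[ℝ] ℝ × ℝ :=
  ((-p) • ContinuousLinearMap.fst ℝ ℝ ℝ - q • ContinuousLinearMap.snd ℝ ℝ ℝ).prod
    (ContinuousLinearMap.fst ℝ ℝ ℝ)

@[simp]
theorem companionField_apply (p q : ℝ) (z : ℝ × ℝ) :
    companionField p q z = (-p * z.1 - q * z.2, z.1) := by
  simp [companionField]

theorem hasDerivAt_criticallyDamped (a t : ℝ) :
    HasDerivAt (fun s => ((1 - a * s) * exp (-(a * s)), s * exp (-(a * s))))
      (companionField (2 * a) (a ^ 2) ((1 - a * t) * exp (-(a * t)), t * exp (-(a * t)))) t := by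
  have hexp : HasDerivAt (fun s => exp (-(a * s))) (exp (-(a * t)) * -a) t := by
    simpa using ((hasDerivAt_id t).const_mul a).neg.exp
  have hu := (((hasDerivAt_id t).const_mul a).const_sub 1).fun_mul hexp
  have hy := (hasDerivAt_id t).fun_mul hexp
  refine (hu.prodMk hy).congr_deriv ?_
  simp only [companionField_apply, id]
  ext <;> ring

def memState (α : ℝ) (x : ℝ → ℝ) (t : ℝ) : ℝ × ℝ :=
  (exp (-(α * t)) * x t, ∫ s in (0 : ℝ)..t, exp (-(α * s)) * x s)

section MemSol

variable {c α lam : ℝ} {x x' : ℝ → ℝ}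

theorem MemSol.continuousOn {M : ℝ → ℝ} (hx : MemSol M lam x x') : ContinuousOn x (Ici 0) :=
  fun t ht => (hx.2.2.1 t ht).continuousWithinAt

theorem MemSol.continuousOn_memState (hx : MemSol (fun t => c * exp (α * t)) lam x x') :
    ContinuousOn (memState α x) (Ici 0) := by
  have hxc := hx.continuousOn
  have hcont : ContinuousOn (fun s => exp (-(α * s)) * x s) (Ici 0) := by fun_prop
  exact hcont.prodMk (continuousOn_primitive_Ici hcont)

theorem MemSol.hasDerivWithinAt_memState (hx : MemSol (fun t => c * exp (α * t)) lam x x')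
    {t : ℝ} (ht : t ∈ Ici 0) :
    HasDerivWithinAt (memState α x) (companionField (lam + α) c (memState α x t)) (Ici t) t := by
  have hxc := hx.continuousOn
  obtain ⟨-, -, hxd, hxe⟩ := hx
  have hkernel : ∫ s in (0 : ℝ)..t, c * exp (α * (t - s)) * x s
      = c * exp (α * t) * ∫ s in (0 : ℝ)..t, exp (-(α * s)) * x s := by
    rw [← intervalIntegral.integral_const_mul]
    refine intervalIntegral.integral_congr fun s _ => ?_
    rw [mul_sub, sub_eq_add_neg, exp_add]
    ring
  have hcont : ContinuousOn (fun s => exp (-(α * s)) * x s) (Ici 0) := by fun_prop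
  have hsub : Ioi t ⊆ Ici 0 := Ioi_subset_Ici_self.trans (Ici_subset_Ici.2 ht)
  have hu : HasDerivWithinAt (fun s => exp (-(α * s)) * x s)
      (exp (-(α * t)) * -α * x t + exp (-(α * t)) * x' t) (Ici t) t := by
    have hexp : HasDerivAt (fun s => exp (-(α * s))) (exp (-(α * t)) * -α) t := by
      simpa using ((hasDerivAt_id t).const_mul α).neg.exp
    exact hexp.hasDerivWithinAt.fun_mul ((hxd t ht).mono (Ici_subset_Ici.2 ht))
  have hY : HasDerivWithinAt (fun t => ∫ s in (0 : ℝ)..t, exp (-(α * s)) * x s)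
      (exp (-(α * t)) * x t) (Ici t) t :=
    intervalIntegral.integral_hasDerivWithinAt_right
      (hcont.mono (by simp [uIcc_of_le (mem_Ici.1 ht), Icc_subset_Ici_self])).intervalIntegrable
      ⟨Ici 0, Filter.mem_of_superset self_mem_nhdsWithin hsub,
        hcont.aestronglyMeasurable measurableSet_Ici⟩
      ((hcont t ht).mono hsub)
  refine (hu.prodMk hY).congr_deriv ?_
  have hx't := hxe t ht
  rw [hkernel] at hx't
  have hinv : exp (-(α * t)) * exp (α * t) = 1 := by rw [← exp_add]; simp
  refine Prod.ext ?_ rfl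
  simp only [memState, companionField_apply]
  linear_combination exp (-(α * t)) * hx't -
    c * (∫ s in (0 : ℝ)..t, exp (-(α * s)) * x s) * hinv

theorem MemSol.eq_of_discrim_eq_zero (hx : MemSol (fun t => c * exp (α * t)) lam x x')
    (hs : (lam + α) ^ 2 - 4 * c = 0) {t : ℝ} (ht : 0 ≤ t) :
    x t = exp ((α - lam) / 2 * t) * (1 - (lam + α) / 2 * t) := by
  set a := (lam + α) / 2
  have hp : lam + α = 2 * a := by ring
  have hc : c = a ^ 2 := by linear_combination -hs / 4
  have hstate := eqOn_Ici_of_hasDerivWithinAt_of_lipschitzWith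
    (companionField (2 * a) (a ^ 2)).lipschitz (f := memState α x)
    (g := fun s => ((1 - a * s) * exp (-(a * s)), s * exp (-(a * s))))
    hx.continuousOn_memState (fun s hs => hp ▸ hc ▸ hx.hasDerivWithinAt_memState hs)
    (Continuous.continuousOn (by fun_prop))
    (fun s _ => (hasDerivAt_criticallyDamped a s).hasDerivWithinAt)
    (by simp [memState, hx.1]) ht
  have hx1 := congrArg Prod.fst hstate
  simp only [memState] at hx1
  calc x t = exp (α * t) * (exp (-(α * t)) * x t) := by
        rw [← mul_assoc, ← exp_add, add_neg_cancel, exp_zero, one_mul]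
    _ = exp ((α - lam) / 2 * t) * (1 - a * t) := by
        rw [hx1, mul_left_comm, ← exp_add, mul_comm]
        congr 2
        ring

theorem MemSol.eq_zero_iff_of_discrim_eq_zero (hx : MemSol (fun t => c * exp (α * t)) lam x x')
    (hs : (lam + α) ^ 2 - 4 * c = 0) {t : ℝ} (ht : 0 ≤ t) :
    x t = 0 ↔ (lam + α) / 2 * t = 1 := by
  rw [hx.eq_of_discrim_eq_zero hs ht, mul_eq_zero, sub_eq_zero, eq_comm (a := (1 : ℝ))]
  simp [exp_ne_zero]

end MemSol

theorem stmt15_general (c α lam : ℝ)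
    (hs : (lam + α) ^ 2 - 4 * c = 0)
    (x x' : ℝ → ℝ) (hx : MemSol (fun t => c * Real.exp (α * t)) lam x x') :
    (lam + α ≤ 0 → ∀ t > (0:ℝ), x t ≠ 0) ∧
    (0 < lam + α → ∀ t > (0:ℝ), (x t = 0 ↔ t = 2 / (lam + α))) := by
  refine ⟨fun hle t ht => ?_, fun hpos t ht => ?_⟩
  · rw [ne_eq, hx.eq_zero_iff_of_discrim_eq_zero hs ht.le]
    nlinarith
  · rw [hx.eq_zero_iff_of_discrim_eq_zero hs ht.le, eq_div_iff hpos.ne']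
    constructor <;> intro h <;> linarith

/-- In the zero-discriminant case: if `λ+α ≤ 0` the solution never vanishes on `(0,∞)`;
if `λ+α > 0` its unique zero in `(0,∞)` is `2/(λ+α)`. -/
theorem stmt15 (c α lam : ℝ) (hc : 0 < c)
    (hs : (lam + α) ^ 2 - 4 * c = 0)
    (x x' : ℝ → ℝ) (hx : MemSol (fun t => c * Real.exp (α * t)) lam x x') :
    (lam + α ≤ 0 → ∀ t > (0:ℝ), x t ≠ 0) ∧
    (0 < lam + α → ∀ t > (0:ℝ), (x t = 0 ↔ t = 2 / (lam + α))) :=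
  stmt15_general c α lam hs x x' hx

end
end
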